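/- arXiv:1301.4073 — 2 statements merged into one kernel-verified Lean document; each statement's English description precedes it below -/
import Mathlib

section
/- Let R be a discrete valuation ring with uniformizer π, and g_(1),...,g_(n) ∈ R[X] monic with 1 ≤ m_(1) ≤ ... ≤ m_(n), M = ∑ m_(k), Res(g_(1),...,g_(n)) ≠ 0, and g_(k)(X) ≡ X^{m_(k)} mod π for all k. Write e' := val_π(Res(g_(1),...,g_(n))) − ∑_{j∈[1,n−1]}((n−j)m_(j) − 1). Then: (a) for every y ∈ π^{e'} R^{1×M} there exists x ∈ R^{1×M} with x·A(g_(1),...,g_(n)) = y; (b) if u ≥ e' and x ∈ R^{1×M} satisfies x·A(g_(1),...,g_(n)) ∈ R^{1×M} π^u, then x ∈ R^{1×M} π^{u−e'}. -/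
/-!
Write `g_k = X^{m_k} + π h_k`. In the expansion of `∏_{j ≠ k} g_j`, a monomial of degree less
than `m_0 + ⋯ + m_l` uses at most `l` of the factors `X^{m_j}` (the `m_j` being sorted), so it
carries `π^{n-1-l}`: the columns of the `l`-th block of `A` are divisible by `π^{n-1-l}`.
Pulling these powers out of the columns, `π^{s+n-1}` divides `det A` and `π^s` divides every
entry of `adj A`, where `s = ∑_{l+1<n} ((n-1-l) m_l - 1)`. Hence `det A = π^{s+e'} v` with `v` a
unit, and `D = π^{-s} adj A` satisfies `D A = A D = π^{e'} v`, which gives both (a) and (b).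
-/

open Polynomial Finset

/-- The global column position of an index in the block-structured resultant matrix. -/
def resPos {n : ℕ} {m : Fin n → ℕ} (q : (k : Fin n) × Fin (m k)) : ℕ :=
  (∑ j ∈ Finset.univ.filter (fun j => j < q.1), m j) + (q.2 : ℕ)

/-- The matrix `A(g_(1), …, g_(n))` whose block of `deg g_(k)` rows consists of the
successively shifted coefficient rows of `∏_{j ≠ k} g_(j)`. -/
noncomputable def resMatrix {R : Type*} [CommRing R] {n : ℕ} (g : Fin n → Polynomial R) :
    Matrix ((k : Fin n) × Fin ((g k).natDegree)) ((k : Fin n) × Fin ((g k).natDegree)) R :=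
  fun p q =>
    if (p.2 : ℕ) ≤ resPos q then
      (∏ j ∈ Finset.univ.erase p.1, g j).coeff (resPos q - (p.2 : ℕ))
    else 0

/-- The generalized resultant `Res(g_(1), …, g_(n)) = det A(g_(1), …, g_(n))`. -/
noncomputable def genRes {R : Type*} [CommRing R] {n : ℕ} (g : Fin n → Polynomial R) : R :=
  (resMatrix g).det

theorem pow_dvd_coeff_prod_of_dvd_sub_X_pow {R ι : Type*} [CommRing R] [DecidableEq ι] {π : R}
    {s : Finset ι} {m : ι → ℕ} {f : ι → R[X]} (hf : ∀ j ∈ s, C π ∣ f j - X ^ m j) {c r : ℕ}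
    (hc : ∀ T ⊆ s, ∑ j ∈ T, m j ≤ r → c ≤ #(s \ T)) :
    π ^ c ∣ (∏ j ∈ s, f j).coeff r := by
  choose! h hh using hf
  have hexpand : ∏ j ∈ s, f j =
      ∑ T ∈ s.powerset, C (π ^ #(s \ T)) * (∏ j ∈ s \ T, h j) * X ^ ∑ j ∈ T, m j := by
    calc ∏ j ∈ s, f j = ∏ j ∈ s, (X ^ m j + C π * h j) :=
          prod_congr rfl fun j hj => by rw [← hh j hj]; ring
      _ = _ := by
        rw [prod_add]
        refine sum_congr rfl fun T _ => ?_
        rw [prod_pow_eq_pow_sum, prod_mul_distrib, prod_const, ← C_pow]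
        ring
  rw [hexpand, finsetSum_coeff]
  refine dvd_sum fun T hT => ?_
  rw [coeff_mul_X_pow']
  split_ifs with hTr
  · rw [coeff_C_mul]
    exact (pow_dvd_pow π (hc T (mem_powerset.mp hT) hTr)).mul_right _
  · exact dvd_zero _

theorem Fin.sum_val_lt_succ {M : Type*} [AddCommMonoid M] {n : ℕ} (f : Fin n → M) (i : Fin n) :
    ∑ j : Fin n with j.val < i.val + 1, f j = ∑ j : Fin n with j < i, f j + f i := by
  have hsplit : univ.filter (fun j : Fin n => j.val < i.val + 1) =
      insert i (univ.filter (· < i)) := by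
    ext j
    simp only [mem_filter, mem_univ, true_and, mem_insert, Fin.ext_iff, Fin.lt_def]
    omega
  rw [hsplit, sum_insert (by simp), add_comm]

theorem sum_val_lt_le_sum_of_le_card {n : ℕ} {m : Fin n → ℕ} (hm : Monotone m) :
    ∀ {c : ℕ} {T : Finset (Fin n)}, c ≤ #T → ∑ j : Fin n with j.val < c, m j ≤ ∑ j ∈ T, m j
  | 0, _, _ => by simp
  | c + 1, T, hT => by
    obtain ⟨a, haT, hca⟩ : ∃ a ∈ T, c ≤ (a : ℕ) := by
      by_contra! h
      have hT_card :=
        card_le_card (t := {j : Fin n | j.val < c}) fun j hj => by simpa using h j hj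
      rw [Fin.card_filter_val_lt] at hT_card
      omega
    have hcn : c < n := hca.trans_lt a.isLt
    have hsplit := Fin.sum_val_lt_succ m ⟨c, hcn⟩
    simp only [Fin.lt_def] at hsplit
    rw [hsplit, ← sum_erase_add T m haT]
    exact add_le_add (sum_val_lt_le_sum_of_le_card hm (by rw [card_erase_of_mem haT]; omega))
      (hm hca)

theorem pow_dvd_resMatrix_apply {R : Type*} [CommRing R] {π : R} {n : ℕ} {g : Fin n → R[X]}
    (hsort : Monotone fun k => (g k).natDegree) (hX : ∀ k, C π ∣ g k - X ^ (g k).natDegree)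
    (p q : (k : Fin n) × Fin (g k).natDegree) :
    π ^ (n - 1 - q.1) ∣ resMatrix g p q := by
  unfold resMatrix
  split_ifs
  · refine pow_dvd_coeff_prod_of_dvd_sub_X_pow (fun j _ => hX j) fun T hT hTr => ?_
    have hq : resPos q < ∑ j : Fin n with j.val < q.1.val + 1, (g j).natDegree := by
      rw [Fin.sum_val_lt_succ]
      exact Nat.add_lt_add_left q.2.isLt _
    have hT_card : #T ≤ q.1 := by
      by_contra! h
      have hT_sum := sum_val_lt_le_sum_of_le_card hsort (c := q.1.val + 1) (T := T) (by omega)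
      omega
    rw [card_sdiff_of_subset hT, card_erase_of_mem (mem_univ _), card_univ, Fintype.card_fin]
    omega
  · exact dvd_zero _

theorem sum_sigma_sub_val_eq {n : ℕ} (m : Fin n → ℕ) (hm : ∀ k, 1 ≤ m k) :
    ∑ q : (k : Fin n) × Fin (m k), (n - 1 - q.1) =
      ∑ k ∈ univ.filter (fun k : Fin n => (k : ℕ) + 1 < n), ((n - ((k : ℕ) + 1)) * m k - 1) +
        (n - 1) := by
  rw [Fintype.sum_sigma]
  simp only [sum_const, card_univ, Fintype.card_fin, smul_eq_mul]
  cases n with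
  | zero => simp
  | succ n =>
    rw [sum_filter, Fin.sum_univ_castSucc, Fin.sum_univ_castSucc]
    simp only [Fin.val_castSucc, Fin.val_last, Fin.is_lt, if_true, lt_irrefl, if_false,
      add_lt_add_iff_right]
    rw [Nat.add_sub_cancel, Nat.sub_self, mul_zero, add_zero, add_zero]
    calc ∑ k : Fin n, m k.castSucc * (n - k)
        = ∑ k : Fin n, (((n + 1 - (k + 1)) * m k.castSucc - 1) + 1) := by
          refine sum_congr rfl fun k _ => ?_
          have hpos : 1 ≤ (n - k) * m k.castSucc := Nat.one_le_iff_ne_zero.mpr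
            (mul_ne_zero (by omega) (by have := hm k.castSucc; omega))
          rw [mul_comm, Nat.add_sub_add_right]
          omega
      _ = _ := by simp [sum_add_distrib]

namespace Matrix

variable {ι : Type*} [Fintype ι] [DecidableEq ι] {R : Type*} [CommRing R]

theorem exists_eq_mul_diagonal_of_dvd {κ : Type*} {A : Matrix κ ι R} {c : ι → R}
    (h : ∀ i j, c j ∣ A i j) : ∃ B : Matrix κ ι R, A = B * diagonal c := by
  choose B hB using h
  exact ⟨of B, by ext i j; rw [mul_diagonal, hB, mul_comm, of_apply]⟩

theorem prod_dvd_det_of_dvd {A : Matrix ι ι R} {c : ι → R} (h : ∀ i j, c j ∣ A i j) :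
    ∏ j, c j ∣ A.det := by
  obtain ⟨B, rfl⟩ := exists_eq_mul_diagonal_of_dvd h
  rw [det_mul, det_diagonal]
  exact dvd_mul_left _ _

theorem prod_erase_dvd_adjugate_of_dvd {A : Matrix ι ι R} {c : ι → R} (h : ∀ i j, c j ∣ A i j)
    (i j : ι) : ∏ k ∈ univ.erase i, c k ∣ A.adjugate i j := by
  obtain ⟨B, rfl⟩ := exists_eq_mul_diagonal_of_dvd h
  rw [adjugate_mul_distrib, adjugate_diagonal, diagonal_mul]
  exact dvd_mul_right _ _

theorem exists_mul_eq_smul_one_of_dvd_adjugate [IsDomain R] {A : Matrix ι ι R} {a b : R}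
    (ha : a ≠ 0) (hadj : ∀ i j, a ∣ A.adjugate i j) (hdet : A.det = a * b) :
    ∃ C : Matrix ι ι R, C * A = b • 1 ∧ A * C = b • 1 := by
  choose C hC using hadj
  have hA : A.adjugate = a • of C := by ext i j; exact hC i j
  have hcancel := smul_right_injective (Matrix ι ι R) ha
  refine ⟨of C, hcancel ?_, hcancel ?_⟩ <;> dsimp only
  · rw [← smul_mul, ← hA, adjugate_mul, hdet, mul_smul]
  · rw [← mul_smul_comm, ← hA, mul_adjugate, hdet, mul_smul]

theorem exists_vecMul_eq_of_mul_eq_smul_one {A C : Matrix ι ι R} {b : R} (hCA : C * A = b • 1)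
    {y : ι → R} (hy : ∀ i, b ∣ y i) : ∃ x, x ᵥ* A = y := by
  choose z hz using hy
  refine ⟨z ᵥ* C, ?_⟩
  rw [vecMul_vecMul, hCA, vecMul_smul, vecMul_one]
  ext i
  exact (hz i).symm

theorem dvd_of_mul_dvd_vecMul [IsDomain R] {A C : Matrix ι ι R} {b : R} (hAC : A * C = b • 1)
    (hb : b ≠ 0) {a : R} {x : ι → R} (hx : ∀ j, a * b ∣ (x ᵥ* A) j) (i : ι) : a ∣ x i := by
  have hx' : ((x ᵥ* A) ᵥ* C) i = x i * b := by
    rw [vecMul_vecMul, hAC, vecMul_smul, vecMul_one, Pi.smul_apply, smul_eq_mul, mul_comm]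
  have hdvd : a * b ∣ x i * b := hx' ▸ dvd_sum fun j _ => (hx j).mul_right _
  exact (mul_dvd_mul_iff_right hb).mp hdvd

end Matrix

theorem IsDiscreteValuationRing.exists_eq_pow_mul_unit {R : Type*} [CommRing R] [IsDomain R]
    [IsDiscreteValuationRing R] {π a : R} (hπ : Irreducible π) {t : ℕ} (h : π ^ t ∣ a)
    (h' : ¬π ^ (t + 1) ∣ a) : ∃ v : Rˣ, a = π ^ t * v := by
  obtain ⟨v, rfl⟩ := h
  refine ⟨(not_not.mp fun hv => h' ?_ : IsUnit v).unit, rfl⟩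
  have hπv : π ∣ v := by
    rw [← Ideal.mem_span_singleton, ← hπ.maximalIdeal_eq]
    exact hv
  rw [pow_succ]
  exact mul_dvd_mul_left _ hπv

theorem resMatrix_solvable_and_dvd_special_general
    {R : Type*} [CommRing R] [IsDomain R] [IsDiscreteValuationRing R]
    (π : R) (hπ : Irreducible π)
    {n : ℕ} (g : Fin n → Polynomial R)
    (hdeg : ∀ k, 1 ≤ (g k).natDegree)
    (hsort : Monotone fun k => (g k).natDegree)
    (hX : ∀ k, C π ∣ (g k - X ^ (g k).natDegree))
    (t : ℕ) (ht : π ^ t ∣ genRes g ∧ ¬ π ^ (t + 1) ∣ genRes g)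
    (e' : ℕ)
    (he' : e' = t - ∑ k ∈ Finset.univ.filter (fun k : Fin n => (k : ℕ) + 1 < n),
        ((n - ((k : ℕ) + 1)) * (g k).natDegree - 1)) :
    (∀ y : ((k : Fin n) × Fin ((g k).natDegree)) → R, (∀ i, π ^ e' ∣ y i) →
        ∃ x : ((k : Fin n) × Fin ((g k).natDegree)) → R,
          Matrix.vecMul x (resMatrix g) = y) ∧
    (∀ u : ℕ, e' ≤ u → ∀ x : ((k : Fin n) × Fin ((g k).natDegree)) → R,
        (∀ i, π ^ u ∣ Matrix.vecMul x (resMatrix g) i) →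
        ∀ i, π ^ (u - e') ∣ x i) := by
  set s := ∑ k ∈ Finset.univ.filter (fun k : Fin n => (k : ℕ) + 1 < n),
    ((n - ((k : ℕ) + 1)) * (g k).natDegree - 1)
  have hcol := pow_dvd_resMatrix_apply hsort hX
  have hsum : ∑ q : (k : Fin n) × Fin (g k).natDegree, (n - 1 - q.1) = s + (n - 1) :=
    sum_sigma_sub_val_eq (fun k => (g k).natDegree) hdeg
  have hdet : π ^ (s + (n - 1)) ∣ genRes g := by
    simpa only [genRes, prod_pow_eq_pow_sum, hsum] using Matrix.prod_dvd_det_of_dvd hcol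
  have hadj : ∀ p q, π ^ s ∣ (resMatrix g).adjugate p q := fun p q => by
    refine (pow_dvd_pow π ?_).trans
      (by simpa only [prod_pow_eq_pow_sum] using Matrix.prod_erase_dvd_adjugate_of_dvd hcol p q)
    have hsplit :=
      sum_erase_add univ (fun q : (k : Fin n) × Fin (g k).natDegree => n - 1 - q.1) (mem_univ p)
    omega
  obtain ⟨v, hv⟩ := IsDiscreteValuationRing.exists_eq_pow_mul_unit hπ ht.1 ht.2
  have hst : s ≤ t := by
    by_contra
    exact ht.2 ((pow_dvd_pow π (by omega)).trans hdet)
  have hb : π ^ e' * v ≠ 0 := mul_ne_zero (pow_ne_zero _ hπ.ne_zero) v.ne_zero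
  obtain ⟨D, hDA, hAD⟩ := Matrix.exists_mul_eq_smul_one_of_dvd_adjugate (b := π ^ e' * v)
    (pow_ne_zero s hπ.ne_zero) hadj (by rw [← genRes, hv, ← mul_assoc, ← pow_add]; congr; omega)
  refine ⟨fun y hy => Matrix.exists_vecMul_eq_of_mul_eq_smul_one hDA fun i => ?_,
    fun u hu x hx => Matrix.dvd_of_mul_dvd_vecMul hAD hb fun j => ?_⟩
  · exact Units.mul_right_dvd.mpr (hy i)
  · rw [← mul_assoc, Units.mul_right_dvd, ← pow_add, Nat.sub_add_cancel hu]
    exact hx j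

/-- **Linear algebra of the resultant matrix in the case `g_(k) ≡ X^{m_(k)} mod π`:**
with `e' = val_π(Res(g_(1), …, g_(n))) − ∑_{j ∈ [1,n−1]}((n−j)·m_(j) − 1)`:
(a) every row vector `y` with entries divisible by `π^{e'}` has the form `x·A(g_(1),…,g_(n))`;
(b) if `u ≥ e'` and the entries of `x·A(g_(1),…,g_(n))` are divisible by `π^u`, then the
entries of `x` are divisible by `π^{u−e'}`. -/
theorem resMatrix_solvable_and_dvd_special
    {R : Type*} [CommRing R] [IsDomain R] [IsDiscreteValuationRing R]
    (π : R) (hπ : Irreducible π)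
    {n : ℕ} (g : Fin n → Polynomial R)
    (hmonic : ∀ k, (g k).Monic) (hdeg : ∀ k, 1 ≤ (g k).natDegree)
    (hsort : Monotone fun k => (g k).natDegree)
    (hres : genRes g ≠ 0)
    (hX : ∀ k, C π ∣ (g k - X ^ (g k).natDegree))
    (t : ℕ) (ht : π ^ t ∣ genRes g ∧ ¬ π ^ (t + 1) ∣ genRes g)
    (e' : ℕ)
    (he' : e' = t - ∑ k ∈ Finset.univ.filter (fun k : Fin n => (k : ℕ) + 1 < n),
        ((n - ((k : ℕ) + 1)) * (g k).natDegree - 1)) :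
    (∀ y : ((k : Fin n) × Fin ((g k).natDegree)) → R, (∀ i, π ^ e' ∣ y i) →
        ∃ x : ((k : Fin n) × Fin ((g k).natDegree)) → R,
          Matrix.vecMul x (resMatrix g) = y) ∧
    (∀ u : ℕ, e' ≤ u → ∀ x : ((k : Fin n) × Fin ((g k).natDegree)) → R,
        (∀ i, π ^ u ∣ Matrix.vecMul x (resMatrix g) i) →
        ∀ i, π ^ (u - e') ∣ x i) :=
  resMatrix_solvable_and_dvd_special_general π hπ g hdeg hsort hX t ht e' he'
end

section
/- Let g_(1), g_(2), g_(3) be monic polynomials of degrees ≥ 1 over an integral domain with Res(g_(1), g_(2), g_(3)) ≠ 0. Then Res(g_(1), g_(2), g_(3)) = Res(g_(1), g_(2)·g_(3)) · Res(g_(2), g_(3)), where the right-hand resultants are classical two-polynomial resultants. In particular, over a discrete valuation ring with uniformizer π, val_π(Res(g_(1),g_(2),g_(3))) = val_π(Res(g_(1), g_(2)g_(3))) + val_π(Res(g_(2), g_(3))). -/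
open Polynomial Finset

/-!
Row `(k, i)` of `A(g₁, …, gₙ)` is the coefficient vector of `X ^ i * ∏_{j ≠ k} g_j`, and its
columns enumerate the monomials of degree `< ∑ deg g_j`. Put `P = g₂ ⋯ gₙ`. The rows of the first
block are those of `A(g₁, P)`; for `k ≥ 2`,
`X ^ i * ∏_{j ≠ k} g_j = g₁ * (X ^ i * ∏_{j ≠ 1, k} g_j)` is the combination of the rows
`X ^ v * g₁` of `A(g₁, P)` whose coefficients form row `(k, i)` of `A(g₂, …, gₙ)`. So, after a
common reindexing, `A(g₁, …, gₙ) = diag(1, A(g₂, …, gₙ)) * A(g₁, P)` whenever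
`deg P = ∑ deg g_j`, and taking determinants gives the factorisation. The valuation statement
follows from the additivity of the `π`-adic multiplicity over a product.
-/

section

open Matrix

variable {R : Type*} [CommRing R] {n : ℕ}

section

variable {M : Type*} [CommMonoid M] (a : M) (f : Fin n → M)

lemma Matrix.prod_univ_erase_zero_vecCons :
    ∏ j ∈ univ.erase 0, (vecCons a f : Fin n.succ → M) j = ∏ j, f j := by
  rw [← Finset.filter_ne', Finset.prod_filter, Fin.prod_univ_succ]
  simp [Fin.succ_ne_zero]

lemma Matrix.prod_univ_erase_succ_vecCons (k : Fin n) :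
    ∏ j ∈ univ.erase k.succ, (vecCons a f : Fin n.succ → M) j = a * ∏ j ∈ univ.erase k, f j := by
  simp only [← Finset.filter_ne', Finset.prod_filter, Fin.prod_univ_succ]
  simp [(Fin.succ_ne_zero k).symm]

end

lemma resPos_eq_finSigmaFinEquiv {m : Fin n → ℕ} (q : (k : Fin n) × Fin (m k)) :
    resPos q = finSigmaFinEquiv q := by
  have hIio : univ.filter (· < q.1) = univ.map (Fin.castLEEmb q.1.2.le) := by
    ext j
    simp only [Finset.mem_filter, Finset.mem_univ, true_and, Finset.mem_map, Fin.castLEEmb_apply]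
    exact ⟨fun hj => ⟨⟨j, hj⟩, rfl⟩, by rintro ⟨i, rfl⟩; exact i.2⟩
  rw [finSigmaFinEquiv_apply, resPos, hIio, Finset.sum_map]
  rfl

def resIndexCongr {n' : ℕ} {m : Fin n → ℕ} {m' : Fin n' → ℕ} (hm : ∑ k, m k = ∑ k, m' k) :
    ((k : Fin n) × Fin (m k)) ≃ ((k : Fin n') × Fin (m' k)) :=
  finSigmaFinEquiv.trans <| (finCongr hm).trans finSigmaFinEquiv.symm

lemma resPos_resIndexCongr {n' : ℕ} {m : Fin n → ℕ} {m' : Fin n' → ℕ} (hm : ∑ k, m k = ∑ k, m' k)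
    (q : (k : Fin n) × Fin (m k)) : resPos (resIndexCongr hm q) = resPos q := by
  simp [resIndexCongr, resPos_eq_finSigmaFinEquiv]

noncomputable def resRow (g : Fin n → R[X]) (p : (k : Fin n) × Fin (g k).natDegree) : R[X] :=
  X ^ (p.2 : ℕ) * ∏ j ∈ univ.erase p.1, g j

lemma resMatrix_apply (g : Fin n → R[X]) (p q : (k : Fin n) × Fin (g k).natDegree) :
    resMatrix g p q = (resRow g p).coeff (resPos q) := by
  rw [resRow, coeff_X_pow_mul']
  rfl

lemma natDegree_resRow_lt (g : Fin n → R[X]) (p : (k : Fin n) × Fin (g k).natDegree) :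
    (resRow g p).natDegree < ∑ k, (g k).natDegree :=
  calc (resRow g p).natDegree ≤ p.2 + ∑ j ∈ univ.erase p.1, (g j).natDegree :=
        natDegree_mul_le.trans (add_le_add (natDegree_X_pow_le _) (natDegree_prod_le _ _))
    _ < (g p.1).natDegree + ∑ j ∈ univ.erase p.1, (g j).natDegree := by
        gcongr; exact p.2.2
    _ = ∑ k, (g k).natDegree := Finset.add_sum_erase _ (fun k => (g k).natDegree) (mem_univ _)

lemma sum_C_coeff_resPos_mul_X_pow {m : Fin n → ℕ} (f : R[X]) (hf : f.natDegree < ∑ k, m k) :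
    ∑ b : (k : Fin n) × Fin (m k), C (f.coeff (resPos b)) * X ^ resPos b = f := by
  simp only [resPos_eq_finSigmaFinEquiv]
  rw [Equiv.sum_comp finSigmaFinEquiv (fun v : Fin _ => C (f.coeff v) * X ^ (v : ℕ)),
    Fin.sum_univ_eq_sum_range (fun v => C (f.coeff v) * X ^ v), ← as_sum_range_C_mul_X_pow' f hf]

section vecCons

variable (g₀ : R[X]) (h : Fin n → R[X])

def resIndexConsEquiv :
    ((k : Fin n.succ) × Fin ((vecCons g₀ h : Fin n.succ → R[X]) k).natDegree) ≃
      Fin g₀.natDegree ⊕ ((k : Fin n) × Fin (h k).natDegree) where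
  toFun p := Fin.cases (motive := fun k => Fin ((vecCons g₀ h : Fin n.succ → R[X]) k).natDegree →
      Fin g₀.natDegree ⊕ ((k : Fin n) × Fin (h k).natDegree))
    Sum.inl (fun k i => Sum.inr ⟨k, i⟩) p.1 p.2
  invFun := Sum.elim (fun i => ⟨0, i⟩) (fun b => ⟨b.1.succ, b.2⟩)
  left_inv := by rintro ⟨k, i⟩; cases k using Fin.cases <;> rfl
  right_inv := by rintro (i | ⟨k, i⟩) <;> rfl

lemma resPos_resIndexConsEquiv_symm_inl (i : Fin g₀.natDegree) :
    resPos ((resIndexConsEquiv g₀ h).symm (.inl i)) = i := by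
  change resPos (⟨0, i⟩ :
    (k : Fin n.succ) × Fin ((vecCons g₀ h : Fin n.succ → R[X]) k).natDegree) = i
  simp [resPos]

lemma resPos_resIndexConsEquiv_symm_inr (b : (k : Fin n) × Fin (h k).natDegree) :
    resPos ((resIndexConsEquiv g₀ h).symm (.inr b)) = g₀.natDegree + resPos b := by
  change resPos (⟨b.1.succ, b.2⟩ :
    (k : Fin n.succ) × Fin ((vecCons g₀ h : Fin n.succ → R[X]) k).natDegree) = _
  rw [resPos, resPos, Finset.sum_filter, Finset.sum_filter, Fin.sum_univ_succ]
  simp [Fin.succ_pos, add_assoc]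

lemma resRow_resIndexConsEquiv_symm_inl (i : Fin g₀.natDegree) :
    resRow (vecCons g₀ h) ((resIndexConsEquiv g₀ h).symm (.inl i)) = X ^ (i : ℕ) * ∏ j, h j :=
  congrArg (X ^ (i : ℕ) * ·) (prod_univ_erase_zero_vecCons g₀ h)

lemma resRow_resIndexConsEquiv_symm_inr (b : (k : Fin n) × Fin (h k).natDegree) :
    resRow (vecCons g₀ h) ((resIndexConsEquiv g₀ h).symm (.inr b)) = g₀ * resRow h b := by
  rw [resRow, resRow, mul_left_comm]
  exact congrArg (X ^ (b.2 : ℕ) * ·) (prod_univ_erase_succ_vecCons g₀ h b.1)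

end vecCons

lemma resRow_pair (a b : R[X]) (r : (k : Fin 2) × Fin ((![a, b] : Fin 2 → R[X]) k).natDegree) :
    resRow ![a, b] r =
      if resPos r < a.natDegree then X ^ resPos r * b else X ^ (resPos r - a.natDegree) * a := by
  obtain ⟨i | ⟨k, i⟩, rfl⟩ := (resIndexConsEquiv a ![b]).symm.surjective r
  · rw [resPos_resIndexConsEquiv_symm_inl, if_pos i.2, resRow_resIndexConsEquiv_symm_inl]
    simp
  · obtain rfl : k = 0 := Subsingleton.elim _ _
    rw [resPos_resIndexConsEquiv_symm_inr, if_neg (by omega), Nat.add_sub_cancel_left,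
      resRow_resIndexConsEquiv_symm_inr]
    simp [resRow, resPos, mul_comm]

section vecCons

variable {g₀ : R[X]} {h : Fin n → R[X]}

lemma sum_natDegree_vecCons_eq_pair (hdeg : (∏ j, h j).natDegree = ∑ j, (h j).natDegree) :
    ∑ k, ((vecCons g₀ h : Fin n.succ → R[X]) k).natDegree =
      ∑ k, ((![g₀, ∏ j, h j] : Fin 2 → R[X]) k).natDegree := by
  simp [Fin.sum_univ_succ, hdeg]

lemma resRow_vecCons_eq_sum (hdeg : (∏ j, h j).natDegree = ∑ j, (h j).natDegree)
    (p : (k : Fin n.succ) × Fin ((vecCons g₀ h : Fin n.succ → R[X]) k).natDegree) :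
    resRow (vecCons g₀ h) p =
      ∑ r, C (fromBlocks 1 0 0 (resMatrix h) (resIndexConsEquiv g₀ h p)
          (resIndexConsEquiv g₀ h r)) *
        resRow ![g₀, ∏ j, h j] (resIndexCongr (sum_natDegree_vecCons_eq_pair hdeg) r) := by
  obtain ⟨s, rfl⟩ := (resIndexConsEquiv g₀ h).symm.surjective p
  rw [← Equiv.sum_comp (resIndexConsEquiv g₀ h).symm, Fintype.sum_sum_type]
  simp only [Equiv.apply_symm_apply, resRow_pair, resPos_resIndexCongr,
    resPos_resIndexConsEquiv_symm_inl, resPos_resIndexConsEquiv_symm_inr, Fin.is_lt, if_true,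
    Nat.add_sub_cancel_left, add_lt_iff_neg_left, Nat.not_lt_zero, if_false]
  rcases s with i | a
  · rw [resRow_resIndexConsEquiv_symm_inl]
    simp [one_apply]
  · rw [resRow_resIndexConsEquiv_symm_inr]
    simp only [fromBlocks_apply₂₁, fromBlocks_apply₂₂, Matrix.zero_apply, C_0,
      zero_mul, Finset.sum_const_zero, zero_add, resMatrix_apply]
    conv_lhs => rw [← sum_C_coeff_resPos_mul_X_pow (resRow h a) (natDegree_resRow_lt h a),
      Finset.mul_sum]
    exact Finset.sum_congr rfl fun _ _ => by ring

lemma resMatrix_vecCons_eq_mul (hdeg : (∏ j, h j).natDegree = ∑ j, (h j).natDegree) :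
    resMatrix (vecCons g₀ h) =
      (fromBlocks 1 0 0 (resMatrix h)).submatrix (resIndexConsEquiv g₀ h) (resIndexConsEquiv g₀ h) *
        (resMatrix ![g₀, ∏ j, h j]).submatrix (resIndexCongr (sum_natDegree_vecCons_eq_pair hdeg))
          (resIndexCongr (sum_natDegree_vecCons_eq_pair hdeg)) := by
  ext p q
  simp only [mul_apply, submatrix_apply, resMatrix_apply, resPos_resIndexCongr,
    ← coeff_C_mul, ← finsetSum_coeff, ← resRow_vecCons_eq_sum hdeg]

theorem genRes_vecCons_eq_mul (hdeg : (∏ j, h j).natDegree = ∑ j, (h j).natDegree) :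
    genRes (vecCons g₀ h) = genRes ![g₀, ∏ j, h j] * genRes h := by
  rw [genRes, resMatrix_vecCons_eq_mul hdeg, det_mul, det_submatrix_equiv_self,
    det_submatrix_equiv_self, det_fromBlocks_zero₂₁, det_one, one_mul,
    mul_comm, genRes, genRes]

end vecCons

end

theorem genRes_three_eq_mul_general
    {R : Type*} [CommRing R] [IsDomain R] [IsDiscreteValuationRing R]
    (π : R) (hπ : Irreducible π)
    (g₁ g₂ g₃ : Polynomial R)
    (h₂ : g₂.Monic) (h₃ : g₃.Monic)
    (t t₁ t₀ : ℕ)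
    (ht : π ^ t ∣ genRes ![g₁, g₂, g₃] ∧ ¬ π ^ (t + 1) ∣ genRes ![g₁, g₂, g₃])
    (ht₁ : π ^ t₁ ∣ genRes ![g₁, g₂ * g₃] ∧ ¬ π ^ (t₁ + 1) ∣ genRes ![g₁, g₂ * g₃])
    (ht₀ : π ^ t₀ ∣ genRes ![g₂, g₃] ∧ ¬ π ^ (t₀ + 1) ∣ genRes ![g₂, g₃]) :
    genRes ![g₁, g₂, g₃] = genRes ![g₁, g₂ * g₃] * genRes ![g₂, g₃] ∧ t = t₁ + t₀ := by
  have hdeg : (∏ j, ![g₂, g₃] j).natDegree = ∑ j, (![g₂, g₃] j).natDegree := by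
    simpa using h₂.natDegree_mul h₃
  have hmul : genRes ![g₁, g₂, g₃] = genRes ![g₁, g₂ * g₃] * genRes ![g₂, g₃] := by
    simpa using genRes_vecCons_eq_mul (g₀ := g₁) hdeg
  refine ⟨hmul, ?_⟩
  have hval := emultiplicity_mul hπ.prime (a := genRes ![g₁, g₂ * g₃]) (b := genRes ![g₂, g₃])
  rw [← hmul, emultiplicity_eq_coe.2 ht, emultiplicity_eq_coe.2 ht₁,
    emultiplicity_eq_coe.2 ht₀] at hval
  exact_mod_cast hval

/-- **Factorisation of the three-fold resultant:**
`Res(g_(1), g_(2), g_(3)) = Res(g_(1), g_(2)·g_(3)) · Res(g_(2), g_(3))`; in particular,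
over a discrete valuation ring the `π`-adic valuations add up:
`val_π(Res(g_(1),g_(2),g_(3))) = val_π(Res(g_(1), g_(2)g_(3))) + val_π(Res(g_(2), g_(3)))`. -/
theorem genRes_three_eq_mul
    {R : Type*} [CommRing R] [IsDomain R] [IsDiscreteValuationRing R]
    (π : R) (hπ : Irreducible π)
    (g₁ g₂ g₃ : Polynomial R)
    (h₁ : g₁.Monic) (h₂ : g₂.Monic) (h₃ : g₃.Monic)
    (hd₁ : 1 ≤ g₁.natDegree) (hd₂ : 1 ≤ g₂.natDegree) (hd₃ : 1 ≤ g₃.natDegree)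
    (hres : genRes ![g₁, g₂, g₃] ≠ 0)
    (t t₁ t₀ : ℕ)
    (ht : π ^ t ∣ genRes ![g₁, g₂, g₃] ∧ ¬ π ^ (t + 1) ∣ genRes ![g₁, g₂, g₃])
    (ht₁ : π ^ t₁ ∣ genRes ![g₁, g₂ * g₃] ∧ ¬ π ^ (t₁ + 1) ∣ genRes ![g₁, g₂ * g₃])
    (ht₀ : π ^ t₀ ∣ genRes ![g₂, g₃] ∧ ¬ π ^ (t₀ + 1) ∣ genRes ![g₂, g₃]) :
    genRes ![g₁, g₂, g₃] = genRes ![g₁, g₂ * g₃] * genRes ![g₂, g₃] ∧ t = t₁ + t₀ :=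
  genRes_three_eq_mul_general π hπ g₁ g₂ g₃ h₂ h₃ t t₁ t₀ ht ht₁ ht₀
end
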